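/- For the evaluation-context grammar e ::= [] | let x = e in t | letpar x = t in e, any two decompositions of the same term t as t = e₁[s₁] = e₂[s₂] are related in one of four ways: e₁[s₁] is a subfocus of e₂[s₂], or e₂[s₂] is a subfocus of e₁[s₁], or the two focuses are branched (they lie in the binding and body, respectively, of a common parallel let), or branched in the other order. -/

import Mathlib

/-- Let-binding modes: sequential or parallel. -/
inductive Mode where
  | seq
  | par
deriving DecidableEq

/-- Terms: variables and (sequential or parallel) let-bindings
`let_m x = s in t` (binders are anonymous: the bound variable is implicit). -/
inductive Term where
  | var (x : ℕ)
  | app (x y : ℕ)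
  | letb (m : Mode) (s t : Term)
deriving DecidableEq

/-- Evaluation contexts: `e ::= [] | let_m x = e in t | letpar x = t in e`. -/
inductive ECtx where
  | hole
  | letE (m : Mode) (e : ECtx) (t : Term)
  | letB (t : Term) (e : ECtx)
deriving DecidableEq

/-- Plug a term into an evaluation context. -/
def ECtx.plug : ECtx → Term → Term
  | .hole, s => s
  | .letE m e t, s => .letb m (e.plug s) t
  | .letB t e, s => .letb .par t (e.plug s)

/-- Compose evaluation contexts: `(e₁.comp e₂).plug s = e₁.plug (e₂.plug s)`. -/
def ECtx.comp : ECtx → ECtx → ECtx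
  | .hole, e => e
  | .letE m e' t, e => .letE m (e'.comp e) t
  | .letB t e', e => .letB t (e'.comp e)

/-- `e₁[s₁]` is a subfocus of `e₂[s₂]`: there is `e` with `s₁ = e[s₂]` and
`e₂ = e₁[e]`. -/
def Subfocus (e₁ : ECtx) (s₁ : Term) (e₂ : ECtx) (s₂ : Term) : Prop :=
  ∃ e : ECtx, s₁ = e.plug s₂ ∧ e₂ = e₁.comp e

/-- `e₁[s₁]` and `e₂[s₂]` are branched focuses: they lie in the binding and
the body, respectively, of a common parallel let. -/
def Branched (e₁ : ECtx) (s₁ : Term) (e₂ : ECtx) (s₂ : Term) : Prop :=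
  ∃ (e e₁' e₂' : ECtx),
    e₁ = e.comp (.letE .par e₁' (e₂'.plug s₂)) ∧
    e₂ = e.comp (.letB (e₁'.plug s₁) e₂')


/-! Induct on the first context. If either context is the hole, one focus contains the other.
If both start with the same let-layer, the plugged terms agree on that layer and the claim
follows from the induction hypothesis after prefixing the layer. The remaining case is a
parallel let whose binding holds one focus and whose body holds the other: the focuses are
branched. -/

theorem ECtx.comp_assoc (a b c : ECtx) : (a.comp b).comp c = a.comp (b.comp c) := by
  induction a <;> simp only [ECtx.comp, *]

def FocusesRelated (e₁ : ECtx) (s₁ : Term) (e₂ : ECtx) (s₂ : Term) : Prop :=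
  Subfocus e₁ s₁ e₂ s₂ ∨ Subfocus e₂ s₂ e₁ s₁ ∨
    Branched e₁ s₁ e₂ s₂ ∨ Branched e₂ s₂ e₁ s₁

section

variable {e₁ e₂ : ECtx} {s₁ s₂ : Term}

theorem Subfocus.comp_left (c : ECtx) (h : Subfocus e₁ s₁ e₂ s₂) :
    Subfocus (c.comp e₁) s₁ (c.comp e₂) s₂ := by
  obtain ⟨e, hs, rfl⟩ := h
  exact ⟨e, hs, (ECtx.comp_assoc c e₁ e).symm⟩

theorem Branched.comp_left (c : ECtx) (h : Branched e₁ s₁ e₂ s₂) :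
    Branched (c.comp e₁) s₁ (c.comp e₂) s₂ := by
  obtain ⟨e, e₁', e₂', rfl, rfl⟩ := h
  exact ⟨c.comp e, e₁', e₂', (ECtx.comp_assoc _ _ _).symm, (ECtx.comp_assoc _ _ _).symm⟩

theorem FocusesRelated.comp_left (c : ECtx) (h : FocusesRelated e₁ s₁ e₂ s₂) :
    FocusesRelated (c.comp e₁) s₁ (c.comp e₂) s₂ := by
  rcases h with h | h | h | h
  · exact .inl (h.comp_left c)
  · exact .inr (.inl (h.comp_left c))
  · exact .inr (.inr (.inl (h.comp_left c)))
  · exact .inr (.inr (.inr (h.comp_left c)))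

theorem FocusesRelated.symm (h : FocusesRelated e₁ s₁ e₂ s₂) : FocusesRelated e₂ s₂ e₁ s₁ := by
  unfold FocusesRelated at h ⊢
  tauto

theorem FocusesRelated.of_hole_left (h : s₁ = e₂.plug s₂) :
    FocusesRelated .hole s₁ e₂ s₂ :=
  .inl ⟨e₂, h, rfl⟩

end

theorem FocusesRelated.letE_letB (e₁ e₂ : ECtx) (s₁ s₂ : Term) :
    FocusesRelated (.letE .par e₁ (e₂.plug s₂)) s₁ (.letB (e₁.plug s₁) e₂) s₂ :=
  .inr (.inr (.inl ⟨.hole, e₁, e₂, rfl, rfl⟩))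

theorem analyze_focus (e₁ e₂ : ECtx) (s₁ s₂ : Term)
    (h : e₁.plug s₁ = e₂.plug s₂) :
    Subfocus e₁ s₁ e₂ s₂ ∨ Subfocus e₂ s₂ e₁ s₁ ∨
    Branched e₁ s₁ e₂ s₂ ∨ Branched e₂ s₂ e₁ s₁ := by
  show FocusesRelated e₁ s₁ e₂ s₂
  induction e₁ generalizing e₂ with
  | hole => exact .of_hole_left h
  | letE m e t ih =>
    cases e₂ with
    | hole => exact (FocusesRelated.of_hole_left h.symm).symm
    | letE m' e' t' =>
      injection h with hm hplug ht
      subst hm ht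
      exact (ih e' hplug).comp_left (.letE m .hole t)
    | letB t' e' =>
      injection h with hm hplug ht
      subst hm ht hplug
      exact FocusesRelated.letE_letB e e' s₁ s₂
  | letB t e ih =>
    cases e₂ with
    | hole => exact (FocusesRelated.of_hole_left h.symm).symm
    | letE m' e' t' =>
      injection h with hm hplug ht
      subst hm ht hplug
      exact (FocusesRelated.letE_letB e' e s₂ s₁).symm
    | letB t' e' =>
      injection h with _ ht hplug
      subst ht
      exact (ih e' hplug).comp_left (.letB t .hole)
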